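/- arXiv:1902.09012 — 2 statements merged into one kernel-verified Lean document; each statement's English description precedes it below -/
import Mathlib

section
/- Let a₁ be a nonzero real constant. For all smooth functions h₁, h₂ : ℝ → ℝ, the commutation relation [Z(h₁), Z(h₂)] = W(t ↦ (h₁'(t)h₂(t) − h₁(t)h₂'(t))/(2a₁)) holds as an equality of maps ℝ⁷ → ℝ⁷. -/
noncomputable section

/-- ℝ⁷ with coordinates `(t,x,y,z,u,v,w)` indexed by `0,…,6`. -/
abbrev R7 : Type := Fin 7 → ℝ

/-- The Lie bracket of two vector fields `A B : R7 → R7`: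
`[A,B](p) = DB(p)·A(p) − DA(p)·B(p)`. -/
def bracket (A B : R7 → R7) : R7 → R7 :=
  fun p => fderiv ℝ B p (A p) - fderiv ℝ A p (B p)

/-- `X₁ = ∂t`. -/
def X1 : R7 → R7 := fun _ => ![1, 0, 0, 0, 0, 0, 0]

/-- `X₂ = 2t∂t + x∂x + y∂y + z∂z − u∂u − v∂v − 2w∂w`. -/
def X2 : R7 → R7 := fun p => ![2 * p 0, p 1, p 2, p 3, -p 4, -p 5, -2 * p 6]

/-- `X₃ = z∂x − x∂z`. -/
def X3 : R7 → R7 := fun p => ![0, p 3, 0, -p 1, 0, 0, 0]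

/-- `Y(f) = f(t)∂x − (x/2)[f'(t)(v∂u − u∂v) + f''(t)∂w]`. -/
def Yf (f : ℝ → ℝ) : R7 → R7 := fun p =>
  ![0, f (p 0), 0, 0,
    -(p 1 / 2) * (deriv f (p 0) * p 5),
    (p 1 / 2) * (deriv f (p 0) * p 4),
    -(p 1 / 2) * deriv (deriv f) (p 0)]

/-- `Z(f) = f(t)∂y − (y/(2a₁))[f'(t)(v∂u − u∂v) + f''(t)∂w]`. -/
def Zf (a₁ : ℝ) (f : ℝ → ℝ) : R7 → R7 := fun p =>
  ![0, 0, f (p 0), 0,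
    -(p 2 / (2 * a₁)) * (deriv f (p 0) * p 5),
    (p 2 / (2 * a₁)) * (deriv f (p 0) * p 4),
    -(p 2 / (2 * a₁)) * deriv (deriv f) (p 0)]

/-- `Q(f) = f(t)∂z − (z/2)[f'(t)(v∂u − u∂v) + f''(t)∂w]`. -/
def Qf (f : ℝ → ℝ) : R7 → R7 := fun p =>
  ![0, 0, 0, f (p 0),
    -(p 3 / 2) * (deriv f (p 0) * p 5),
    (p 3 / 2) * (deriv f (p 0) * p 4),
    -(p 3 / 2) * deriv (deriv f) (p 0)]

/-- `W(f) = f(t)(v∂u − u∂v) + f'(t)∂w`. -/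
def Wf (f : ℝ → ℝ) : R7 → R7 := fun p =>
  ![0, 0, 0, 0, f (p 0) * p 5, -(f (p 0) * p 4), deriv f (p 0)]

abbrev pr (i : Fin 7) : R7 →L[ℝ] ℝ := ContinuousLinearMap.proj i

lemma Zf_hasFDerivAt (a₁ : ℝ) (h : ℝ → ℝ) (hh : ContDiff ℝ (⊤ : ℕ∞) h) (p : R7) :
    HasFDerivAt (Zf a₁ h) (ContinuousLinearMap.pi
      ![0, 0,
        deriv h (p 0) • pr 0,
        0,
        (-(deriv h (p 0) * p 5) / (2 * a₁)) • pr 2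
          + (-(p 2 / (2 * a₁)) * (deriv (deriv h) (p 0) * p 5)) • pr 0
          + (-(p 2 / (2 * a₁)) * deriv h (p 0)) • pr 5,
        ((deriv h (p 0) * p 4) / (2 * a₁)) • pr 2
          + ((p 2 / (2 * a₁)) * (deriv (deriv h) (p 0) * p 4)) • pr 0
          + ((p 2 / (2 * a₁)) * deriv h (p 0)) • pr 4,
        (-(deriv (deriv h) (p 0)) / (2 * a₁)) • pr 2
          + (-(p 2 / (2 * a₁)) * deriv (deriv (deriv h)) (p 0)) • pr 0]) p := by
  have hh1 : ContDiff ℝ (⊤ : ℕ∞) (deriv h) := (contDiff_infty_iff_deriv.mp hh).2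
  have hh2 : ContDiff ℝ (⊤ : ℕ∞) (deriv (deriv h)) := (contDiff_infty_iff_deriv.mp hh1).2
  have H0 : HasFDerivAt (fun q : R7 => q 0) (pr 0) p := hasFDerivAt_apply 0 p
  have H2 : HasFDerivAt (fun q : R7 => q 2) (pr 2) p := hasFDerivAt_apply 2 p
  have H4 : HasFDerivAt (fun q : R7 => q 4) (pr 4) p := hasFDerivAt_apply 4 p
  have H5 : HasFDerivAt (fun q : R7 => q 5) (pr 5) p := hasFDerivAt_apply 5 p
  have Dh : HasFDerivAt (fun q : R7 => h (q 0)) (deriv h (p 0) • pr 0) p :=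
    ((hh.differentiable (by simp) (p 0)).hasDerivAt).comp_hasFDerivAt p H0
  have Dh1 : HasFDerivAt (fun q : R7 => deriv h (q 0))
      (deriv (deriv h) (p 0) • pr 0) p :=
    by have := ((hh1.differentiable (by simp) (p 0)).hasDerivAt).comp_hasFDerivAt p H0; exact this
  have Dh2 : HasFDerivAt (fun q : R7 => deriv (deriv h) (q 0))
      (deriv (deriv (deriv h)) (p 0) • pr 0) p :=
    by have := ((hh2.differentiable (by simp) (p 0)).hasDerivAt).comp_hasFDerivAt p H0; exact this
  have Hc2 : HasFDerivAt (fun q : R7 => q 2 / (2 * a₁)) ((1 / (2 * a₁)) • pr 2) p := by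
    have := H2.mul_const (1 / (2 * a₁))
    refine (this.congr_fderiv ?_).congr_of_eventuallyEq (.of_forall fun q => by ring)
    ext v; simp
  refine hasFDerivAt_pi.2 fun i => ?_
  have e : ∀ q : R7, Zf a₁ h q = ![0, 0, h (q 0), 0,
      -(q 2 / (2 * a₁)) * (deriv h (q 0) * q 5),
      (q 2 / (2 * a₁)) * (deriv h (q 0) * q 4),
      -(q 2 / (2 * a₁)) * deriv (deriv h) (q 0)] := fun q => rfl
  fin_cases i <;>
    simp only [e, Fin.isValue, Matrix.cons_val_zero', Matrix.cons_val_succ']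
  · exact hasFDerivAt_const 0 p
  · exact hasFDerivAt_const 0 p
  · exact Dh
  · exact hasFDerivAt_const 0 p
  · exact ((Hc2.neg).mul (Dh1.mul H5)).congr_fderiv (by
      ext v
      simp [Fin.isValue, Matrix.cons_val_zero', Matrix.cons_val_succ', smul_smul]
      ring)
  · exact (Hc2.mul (Dh1.mul H4)).congr_fderiv (by
      ext v
      simp [Fin.isValue, Matrix.cons_val_zero', Matrix.cons_val_succ', smul_smul]
      ring)
  · exact ((Hc2.neg).mul Dh2).congr_fderiv (by
      ext v
      simp [Fin.isValue, Matrix.cons_val_zero', Matrix.cons_val_succ', smul_smul]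
      ring)

set_option maxHeartbeats 1000000 in
theorem stmt5 (a₁ : ℝ) (ha₁ : a₁ ≠ 0) (h₁ h₂ : ℝ → ℝ)
    (hh₁ : ContDiff ℝ (⊤ : ℕ∞) h₁) (hh₂ : ContDiff ℝ (⊤ : ℕ∞) h₂) :
    bracket (Zf a₁ h₁) (Zf a₁ h₂) =
      Wf (fun t => (deriv h₁ t * h₂ t - h₁ t * deriv h₂ t) / (2 * a₁)) := by
  funext p
  have K₁ := Zf_hasFDerivAt a₁ h₁ hh₁ p
  have K₂ := Zf_hasFDerivAt a₁ h₂ hh₂ p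
  have hd1 : ContDiff ℝ (⊤ : ℕ∞) (deriv h₁) := (contDiff_infty_iff_deriv.mp hh₁).2
  have hd2 : ContDiff ℝ (⊤ : ℕ∞) (deriv h₂) := (contDiff_infty_iff_deriv.mp hh₂).2
  have d1 : HasDerivAt h₁ (deriv h₁ (p 0)) (p 0) :=
    (hh₁.differentiable (by simp) (p 0)).hasDerivAt
  have d2 : HasDerivAt h₂ (deriv h₂ (p 0)) (p 0) :=
    (hh₂.differentiable (by simp) (p 0)).hasDerivAt
  have d1' : HasDerivAt (deriv h₁) (deriv (deriv h₁) (p 0)) (p 0) :=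
    (hd1.differentiable (by simp) (p 0)).hasDerivAt
  have d2' : HasDerivAt (deriv h₂) (deriv (deriv h₂) (p 0)) (p 0) :=
    (hd2.differentiable (by simp) (p 0)).hasDerivAt
  have hf : deriv (fun t => (deriv h₁ t * h₂ t - h₁ t * deriv h₂ t) / (2 * a₁)) (p 0)
      = ((deriv (deriv h₁) (p 0) * h₂ (p 0) + deriv h₁ (p 0) * deriv h₂ (p 0))
          - (deriv h₁ (p 0) * deriv h₂ (p 0) + h₁ (p 0) * deriv (deriv h₂) (p 0))) / (2 * a₁) :=
    (((d1'.mul d2).sub (d1.mul d2')).div_const (2 * a₁)).deriv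
  show fderiv ℝ (Zf a₁ h₂) p (Zf a₁ h₁ p) - fderiv ℝ (Zf a₁ h₁) p (Zf a₁ h₂ p) = _
  rw [K₁.fderiv, K₂.fderiv]
  have c0 : ∀ g : ℝ → ℝ, Zf a₁ g p 0 = 0 := fun _ => rfl
  have c2 : ∀ g : ℝ → ℝ, Zf a₁ g p 2 = g (p 0) := fun _ => rfl
  have c4 : ∀ g : ℝ → ℝ, Zf a₁ g p 4 = -(p 2 / (2 * a₁)) * (deriv g (p 0) * p 5) := fun _ => rfl
  have c5 : ∀ g : ℝ → ℝ, Zf a₁ g p 5 = (p 2 / (2 * a₁)) * (deriv g (p 0) * p 4) := fun _ => rfl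
  funext i
  fin_cases i <;>
    simp only [c0, c2, c4, c5, Wf, hf, ContinuousLinearMap.pi_apply, ContinuousLinearMap.add_apply,
      ContinuousLinearMap.coe_smul', ContinuousLinearMap.proj_apply, Pi.smul_apply,
      ContinuousLinearMap.zero_apply, smul_eq_mul, Fin.isValue, Matrix.cons_val_zero',
      Matrix.cons_val_succ', Pi.sub_apply, pr] <;>
    field_simp <;> ring

end
end

section
/- Let a₁ be a nonzero real constant, and let L be the set of all vector fields on ℝ⁷ of the form c₁X₁ + c₂X₂ + c₃X₃ + Y(g) + Z(h) + Q(k) + W(m), where c₁, c₂, c₃ ∈ ℝ and g, h, k, m : ℝ → ℝ are smooth. Then L is closed under the Lie bracket of vector fields: for any V₁, V₂ ∈ L there exist constants c₁, c₂, c₃ ∈ ℝ and smooth functions g, h, k, m : ℝ → ℝ such that [V₁, V₂] = c₁X₁ + c₂X₂ + c₃X₃ + Y(g) + Z(h) + Q(k) + W(m). -/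
noncomputable section

/-- Membership in the full symmetry algebra
`L = {c₁X₁ + c₂X₂ + c₃X₃ + Y(g) + Z(h) + Q(k) + W(m)}`. -/
def memL (a₁ : ℝ) (V : R7 → R7) : Prop :=
  ∃ (c₁ c₂ c₃ : ℝ) (g h k m : ℝ → ℝ),
    ContDiff ℝ (⊤ : ℕ∞) g ∧ ContDiff ℝ (⊤ : ℕ∞) h ∧ ContDiff ℝ (⊤ : ℕ∞) k ∧ ContDiff ℝ (⊤ : ℕ∞) m ∧
    V = c₁ • X1 + c₂ • X2 + c₃ • X3 + Yf g + Zf a₁ h + Qf k + Wf m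

/-! ### Auxiliary machinery -/

@[simp] lemma vec7_0 {α : Type*} (a0 a1 a2 a3 a4 a5 a6 : α) : ![a0,a1,a2,a3,a4,a5,a6] (0:Fin 7) = a0 := rfl
@[simp] lemma vec7_1 {α : Type*} (a0 a1 a2 a3 a4 a5 a6 : α) : ![a0,a1,a2,a3,a4,a5,a6] (1:Fin 7) = a1 := rfl
@[simp] lemma vec7_2 {α : Type*} (a0 a1 a2 a3 a4 a5 a6 : α) : ![a0,a1,a2,a3,a4,a5,a6] (2:Fin 7) = a2 := rfl
@[simp] lemma vec7_3 {α : Type*} (a0 a1 a2 a3 a4 a5 a6 : α) : ![a0,a1,a2,a3,a4,a5,a6] (3:Fin 7) = a3 := rfl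
@[simp] lemma vec7_4 {α : Type*} (a0 a1 a2 a3 a4 a5 a6 : α) : ![a0,a1,a2,a3,a4,a5,a6] (4:Fin 7) = a4 := rfl
@[simp] lemma vec7_5 {α : Type*} (a0 a1 a2 a3 a4 a5 a6 : α) : ![a0,a1,a2,a3,a4,a5,a6] (5:Fin 7) = a5 := rfl
@[simp] lemma vec7_6 {α : Type*} (a0 a1 a2 a3 a4 a5 a6 : α) : ![a0,a1,a2,a3,a4,a5,a6] (6:Fin 7) = a6 := rfl

@[simp] lemma vec7m_0 {α : Type*} (a0 a1 a2 a3 a4 a5 a6 : α) (hp : (0:ℕ) < 7) : ![a0,a1,a2,a3,a4,a5,a6] ⟨0,hp⟩ = a0 := rfl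
@[simp] lemma vec7m_1 {α : Type*} (a0 a1 a2 a3 a4 a5 a6 : α) (hp : (1:ℕ) < 7) : ![a0,a1,a2,a3,a4,a5,a6] ⟨1,hp⟩ = a1 := rfl
@[simp] lemma vec7m_2 {α : Type*} (a0 a1 a2 a3 a4 a5 a6 : α) (hp : (2:ℕ) < 7) : ![a0,a1,a2,a3,a4,a5,a6] ⟨2,hp⟩ = a2 := rfl
@[simp] lemma vec7m_3 {α : Type*} (a0 a1 a2 a3 a4 a5 a6 : α) (hp : (3:ℕ) < 7) : ![a0,a1,a2,a3,a4,a5,a6] ⟨3,hp⟩ = a3 := rfl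
@[simp] lemma vec7m_4 {α : Type*} (a0 a1 a2 a3 a4 a5 a6 : α) (hp : (4:ℕ) < 7) : ![a0,a1,a2,a3,a4,a5,a6] ⟨4,hp⟩ = a4 := rfl
@[simp] lemma vec7m_5 {α : Type*} (a0 a1 a2 a3 a4 a5 a6 : α) (hp : (5:ℕ) < 7) : ![a0,a1,a2,a3,a4,a5,a6] ⟨5,hp⟩ = a5 := rfl
@[simp] lemma vec7m_6 {α : Type*} (a0 a1 a2 a3 a4 a5 a6 : α) (hp : (6:ℕ) < 7) : ![a0,a1,a2,a3,a4,a5,a6] ⟨6,hp⟩ = a6 := rfl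

lemma coordFD (p : R7) (i : Fin 7) :
    HasFDerivAt (fun x : R7 => x i) (ContinuousLinearMap.proj (R := ℝ) (φ := fun _ : Fin 7 => ℝ) i) p :=
  (ContinuousLinearMap.proj (R := ℝ) (φ := fun _ : Fin 7 => ℝ) i).hasFDerivAt

lemma smoothD {f : ℝ → ℝ} (hf : ContDiff ℝ (⊤:ℕ∞) f) : ContDiff ℝ (⊤:ℕ∞) (deriv f) := by
  simpa using hf.iterate_deriv 1

lemma smoothHD {f : ℝ → ℝ} (hf : ContDiff ℝ (⊤:ℕ∞) f) (t : ℝ) : HasDerivAt f (deriv f t) t :=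
  (hf.differentiable (by norm_num) t).hasDerivAt

lemma compFD {f : ℝ → ℝ} (hf : ContDiff ℝ (⊤:ℕ∞) f) (p : R7) :
    HasFDerivAt (fun x : R7 => f (x 0))
      (deriv f (p 0) • ContinuousLinearMap.proj (R := ℝ) (φ := fun _ : Fin 7 => ℝ) 0) p :=
  HasDerivAt.comp_hasFDerivAt p (smoothHD hf (p 0)) (coordFD p 0)

/-- The general element of the algebra, written componentwise. -/
def gen (a₁ c₁ c₂ c₃ : ℝ) (g h k m : ℝ → ℝ) : R7 → R7 := fun x =>
  ![c₁ + 2*c₂*x 0,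
    c₂*x 1 + c₃*x 3 + g (x 0),
    c₂*x 2 + h (x 0),
    c₂*x 3 - c₃*x 1 + k (x 0),
    -(c₂*x 4) - 1/2*(x 1*(deriv g (x 0)*x 5)) - 1/(2*a₁)*(x 2*(deriv h (x 0)*x 5))
      - 1/2*(x 3*(deriv k (x 0)*x 5)) + m (x 0)*x 5,
    -(c₂*x 5) + 1/2*(x 1*(deriv g (x 0)*x 4)) + 1/(2*a₁)*(x 2*(deriv h (x 0)*x 4))
      + 1/2*(x 3*(deriv k (x 0)*x 4)) - m (x 0)*x 4,
    -(2*c₂*x 6) - 1/2*(x 1*deriv (deriv g) (x 0)) - 1/(2*a₁)*(x 2*deriv (deriv h) (x 0))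
      - 1/2*(x 3*deriv (deriv k) (x 0)) + deriv m (x 0)]

lemma sum_eq_gen (a₁ c₁ c₂ c₃ : ℝ) (g h k m : ℝ → ℝ) :
    c₁ • X1 + c₂ • X2 + c₃ • X3 + Yf g + Zf a₁ h + Qf k + Wf m = gen a₁ c₁ c₂ c₃ g h k m := by
  funext p i
  fin_cases i <;>
  · simp only [Pi.add_apply, Pi.smul_apply, smul_eq_mul, X1, X2, X3, Yf, Zf, Qf, Wf, gen,
      vec7m_0, vec7m_1, vec7m_2, vec7m_3, vec7m_4, vec7m_5, vec7m_6]
    ring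

set_option maxHeartbeats 1600000 in
lemma gen_fderiv_apply (a₁ c₁ c₂ c₃ : ℝ) (g h k m : ℝ → ℝ)
    (hg : ContDiff ℝ (⊤:ℕ∞) g) (hh : ContDiff ℝ (⊤:ℕ∞) h)
    (hk : ContDiff ℝ (⊤:ℕ∞) k) (hm : ContDiff ℝ (⊤:ℕ∞) m) (p q : R7) (i : Fin 7) :
    fderiv ℝ (gen a₁ c₁ c₂ c₃ g h k m) p q i =
    ![2*c₂*q 0,
      c₂*q 1 + c₃*q 3 + deriv g (p 0)*q 0,
      c₂*q 2 + deriv h (p 0)*q 0,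
      c₂*q 3 - c₃*q 1 + deriv k (p 0)*q 0,
      -(c₂*q 4) - 1/2*(q 1*(deriv g (p 0)*p 5) + p 1*(deriv (deriv g) (p 0)*q 0*p 5 + deriv g (p 0)*q 5))
        - 1/(2*a₁)*(q 2*(deriv h (p 0)*p 5) + p 2*(deriv (deriv h) (p 0)*q 0*p 5 + deriv h (p 0)*q 5))
        - 1/2*(q 3*(deriv k (p 0)*p 5) + p 3*(deriv (deriv k) (p 0)*q 0*p 5 + deriv k (p 0)*q 5))
        + deriv m (p 0)*q 0*p 5 + m (p 0)*q 5,
      -(c₂*q 5) + 1/2*(q 1*(deriv g (p 0)*p 4) + p 1*(deriv (deriv g) (p 0)*q 0*p 4 + deriv g (p 0)*q 4))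
        + 1/(2*a₁)*(q 2*(deriv h (p 0)*p 4) + p 2*(deriv (deriv h) (p 0)*q 0*p 4 + deriv h (p 0)*q 4))
        + 1/2*(q 3*(deriv k (p 0)*p 4) + p 3*(deriv (deriv k) (p 0)*q 0*p 4 + deriv k (p 0)*q 4))
        - (deriv m (p 0)*q 0*p 4 + m (p 0)*q 4),
      -(2*c₂*q 6) - 1/2*(q 1*deriv (deriv g) (p 0) + p 1*(deriv (deriv (deriv g)) (p 0)*q 0))
        - 1/(2*a₁)*(q 2*deriv (deriv h) (p 0) + p 2*(deriv (deriv (deriv h)) (p 0)*q 0))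
        - 1/2*(q 3*deriv (deriv k) (p 0) + p 3*(deriv (deriv (deriv k)) (p 0)*q 0))
        + deriv (deriv m) (p 0)*q 0] i := by
  have h0 := ((coordFD p 0).const_mul (2*c₂)).const_add c₁
  have h1 := (((coordFD p 1).const_mul c₂).add ((coordFD p 3).const_mul c₃)).add (compFD hg p)
  have h2 := ((coordFD p 2).const_mul c₂).add (compFD hh p)
  have h3 := (((coordFD p 3).const_mul c₂).sub ((coordFD p 1).const_mul c₃)).add (compFD hk p)
  have a4g := ((coordFD p 1).mul ((compFD (smoothD hg) p).mul (coordFD p 5))).const_mul (1/2)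
  have a4h := ((coordFD p 2).mul ((compFD (smoothD hh) p).mul (coordFD p 5))).const_mul (1/(2*a₁))
  have a4k := ((coordFD p 3).mul ((compFD (smoothD hk) p).mul (coordFD p 5))).const_mul (1/2)
  have a4m := (compFD hm p).mul (coordFD p 5)
  have h4 := (((((coordFD p 4).const_mul c₂).neg.sub a4g).sub a4h).sub a4k).add a4m
  have a5g := ((coordFD p 1).mul ((compFD (smoothD hg) p).mul (coordFD p 4))).const_mul (1/2)
  have a5h := ((coordFD p 2).mul ((compFD (smoothD hh) p).mul (coordFD p 4))).const_mul (1/(2*a₁))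
  have a5k := ((coordFD p 3).mul ((compFD (smoothD hk) p).mul (coordFD p 4))).const_mul (1/2)
  have a5m := (compFD hm p).mul (coordFD p 4)
  have h5 := (((((coordFD p 5).const_mul c₂).neg.add a5g).add a5h).add a5k).sub a5m
  have a6g := ((coordFD p 1).mul (compFD (smoothD (smoothD hg)) p)).const_mul (1/2)
  have a6h := ((coordFD p 2).mul (compFD (smoothD (smoothD hh)) p)).const_mul (1/(2*a₁))
  have a6k := ((coordFD p 3).mul (compFD (smoothD (smoothD hk)) p)).const_mul (1/2)
  have h6 := (((((coordFD p 6).const_mul (2*c₂)).neg.sub a6g).sub a6h).sub a6k).add (compFD (smoothD hm) p)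
  have hdiff : DifferentiableAt ℝ (gen a₁ c₁ c₂ c₃ g h k m) p := by
    rw [differentiableAt_pi]
    intro j; fin_cases j
    exacts [h0.differentiableAt, h1.differentiableAt, h2.differentiableAt,
      h3.differentiableAt, h4.differentiableAt, h5.differentiableAt, h6.differentiableAt]
  have key : ∀ (j : Fin 7) (Lj : R7 →L[ℝ] ℝ),
      HasFDerivAt (fun x => gen a₁ c₁ c₂ c₃ g h k m x j) Lj p →
      fderiv ℝ (gen a₁ c₁ c₂ c₃ g h k m) p q j = Lj q := by
    intro j Lj hLj
    have e := (hasFDerivAt_pi'.mp hdiff.hasFDerivAt j).unique hLj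
    have e2 := congrArg (fun T : R7 →L[ℝ] ℝ => T q) e
    simpa using e2
  fin_cases i
  · rw [key ⟨0, of_decide_eq_true rfl⟩ _ h0]
    simp only [ContinuousLinearMap.add_apply, ContinuousLinearMap.sub_apply,
        ContinuousLinearMap.neg_apply, ContinuousLinearMap.smul_apply,
        ContinuousLinearMap.proj_apply, smul_eq_mul, vec7m_0, vec7m_1, vec7m_2, vec7m_3, vec7m_4, vec7m_5, vec7m_6]
    try ring
  · rw [key ⟨1, of_decide_eq_true rfl⟩ _ h1]
    simp only [ContinuousLinearMap.add_apply, ContinuousLinearMap.sub_apply,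
        ContinuousLinearMap.neg_apply, ContinuousLinearMap.smul_apply,
        ContinuousLinearMap.proj_apply, smul_eq_mul, vec7m_0, vec7m_1, vec7m_2, vec7m_3, vec7m_4, vec7m_5, vec7m_6]
    try ring
  · rw [key ⟨2, of_decide_eq_true rfl⟩ _ h2]
    simp only [ContinuousLinearMap.add_apply, ContinuousLinearMap.sub_apply,
        ContinuousLinearMap.neg_apply, ContinuousLinearMap.smul_apply,
        ContinuousLinearMap.proj_apply, smul_eq_mul, vec7m_0, vec7m_1, vec7m_2, vec7m_3, vec7m_4, vec7m_5, vec7m_6]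
    try ring
  · rw [key ⟨3, of_decide_eq_true rfl⟩ _ h3]
    simp only [ContinuousLinearMap.add_apply, ContinuousLinearMap.sub_apply,
        ContinuousLinearMap.neg_apply, ContinuousLinearMap.smul_apply,
        ContinuousLinearMap.proj_apply, smul_eq_mul, vec7m_0, vec7m_1, vec7m_2, vec7m_3, vec7m_4, vec7m_5, vec7m_6]
    try ring
  · rw [key ⟨4, of_decide_eq_true rfl⟩ _ h4]; simp only [Pi.mul_apply]
    simp only [ContinuousLinearMap.add_apply, ContinuousLinearMap.sub_apply,
        ContinuousLinearMap.neg_apply, ContinuousLinearMap.smul_apply,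
        ContinuousLinearMap.proj_apply, smul_eq_mul, vec7m_0, vec7m_1, vec7m_2, vec7m_3, vec7m_4, vec7m_5, vec7m_6]
    try ring
  · rw [key ⟨5, of_decide_eq_true rfl⟩ _ h5]; simp only [Pi.mul_apply]
    simp only [ContinuousLinearMap.add_apply, ContinuousLinearMap.sub_apply,
        ContinuousLinearMap.neg_apply, ContinuousLinearMap.smul_apply,
        ContinuousLinearMap.proj_apply, smul_eq_mul, vec7m_0, vec7m_1, vec7m_2, vec7m_3, vec7m_4, vec7m_5, vec7m_6]
    try ring
  · rw [key ⟨6, of_decide_eq_true rfl⟩ _ h6]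
    simp only [ContinuousLinearMap.add_apply, ContinuousLinearMap.sub_apply,
        ContinuousLinearMap.neg_apply, ContinuousLinearMap.smul_apply,
        ContinuousLinearMap.proj_apply, smul_eq_mul, vec7m_0, vec7m_1, vec7m_2, vec7m_3, vec7m_4, vec7m_5, vec7m_6]
    try ring


/-- Coefficient function combination appearing in brackets. -/
def cmb (c₁ c₂ c₃ d₁ d₂ d₃ : ℝ) (f₁ f₂ s₁ s₂ : ℝ → ℝ) : ℝ → ℝ := fun t =>
  c₁*deriv f₂ t - d₁*deriv f₁ t + c₂*(2*t*deriv f₂ t - f₂ t) - d₂*(2*t*deriv f₁ t - f₁ t)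
    - c₃*s₂ t + d₃*s₁ t

/-- The `W`-coefficient combination appearing in brackets. -/
def cmbm (a₁ c₁ c₂ d₁ d₂ : ℝ) (m₁ m₂ g₁ g₂ h₁ h₂ k₁ k₂ : ℝ → ℝ) : ℝ → ℝ := fun t =>
  c₁*deriv m₂ t - d₁*deriv m₁ t + c₂*(2*t*deriv m₂ t) - d₂*(2*t*deriv m₁ t)
    + 1/2*(g₂ t*deriv g₁ t - g₁ t*deriv g₂ t) + 1/(2*a₁)*(h₂ t*deriv h₁ t - h₁ t*deriv h₂ t)
    + 1/2*(k₂ t*deriv k₁ t - k₁ t*deriv k₂ t)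

lemma cmb_contDiff {c₁ c₂ c₃ d₁ d₂ d₃ : ℝ} {f₁ f₂ s₁ s₂ : ℝ → ℝ}
    (hf₁ : ContDiff ℝ (⊤:ℕ∞) f₁) (hf₂ : ContDiff ℝ (⊤:ℕ∞) f₂)
    (hs₁ : ContDiff ℝ (⊤:ℕ∞) s₁) (hs₂ : ContDiff ℝ (⊤:ℕ∞) s₂) :
    ContDiff ℝ (⊤:ℕ∞) (cmb c₁ c₂ c₃ d₁ d₂ d₃ f₁ f₂ s₁ s₂) := by
  exact (((((contDiff_const.mul (smoothD hf₂)).sub (contDiff_const.mul (smoothD hf₁))).add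
    (contDiff_const.mul (((contDiff_const.mul contDiff_id).mul (smoothD hf₂)).sub hf₂))).sub
    (contDiff_const.mul (((contDiff_const.mul contDiff_id).mul (smoothD hf₁)).sub hf₁))).sub
    (contDiff_const.mul hs₂)).add (contDiff_const.mul hs₁)

lemma cmbm_contDiff {a₁ c₁ c₂ d₁ d₂ : ℝ} {m₁ m₂ g₁ g₂ h₁ h₂ k₁ k₂ : ℝ → ℝ}
    (hm₁ : ContDiff ℝ (⊤:ℕ∞) m₁) (hm₂ : ContDiff ℝ (⊤:ℕ∞) m₂)
    (hg₁ : ContDiff ℝ (⊤:ℕ∞) g₁) (hg₂ : ContDiff ℝ (⊤:ℕ∞) g₂)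
    (hh₁ : ContDiff ℝ (⊤:ℕ∞) h₁) (hh₂ : ContDiff ℝ (⊤:ℕ∞) h₂)
    (hk₁ : ContDiff ℝ (⊤:ℕ∞) k₁) (hk₂ : ContDiff ℝ (⊤:ℕ∞) k₂) :
    ContDiff ℝ (⊤:ℕ∞) (cmbm a₁ c₁ c₂ d₁ d₂ m₁ m₂ g₁ g₂ h₁ h₂ k₁ k₂) := by
  exact ((((((contDiff_const.mul (smoothD hm₂)).sub (contDiff_const.mul (smoothD hm₁))).add
    (contDiff_const.mul ((contDiff_const.mul contDiff_id).mul (smoothD hm₂)))).sub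
    (contDiff_const.mul ((contDiff_const.mul contDiff_id).mul (smoothD hm₁)))).add
    (contDiff_const.mul ((hg₂.mul (smoothD hg₁)).sub (hg₁.mul (smoothD hg₂))))).add
    (contDiff_const.mul ((hh₂.mul (smoothD hh₁)).sub (hh₁.mul (smoothD hh₂))))).add
    (contDiff_const.mul ((hk₂.mul (smoothD hk₁)).sub (hk₁.mul (smoothD hk₂))))

lemma deriv_cmb {c₁ c₂ c₃ d₁ d₂ d₃ : ℝ} {f₁ f₂ s₁ s₂ : ℝ → ℝ}
    (hf₁ : ContDiff ℝ (⊤:ℕ∞) f₁) (hf₂ : ContDiff ℝ (⊤:ℕ∞) f₂)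
    (hs₁ : ContDiff ℝ (⊤:ℕ∞) s₁) (hs₂ : ContDiff ℝ (⊤:ℕ∞) s₂) (t : ℝ) :
    deriv (cmb c₁ c₂ c₃ d₁ d₂ d₃ f₁ f₂ s₁ s₂) t =
      c₁*deriv (deriv f₂) t - d₁*deriv (deriv f₁) t
        + c₂*(2*deriv f₂ t + 2*t*deriv (deriv f₂) t - deriv f₂ t)
        - d₂*(2*deriv f₁ t + 2*t*deriv (deriv f₁) t - deriv f₁ t)
        - c₃*deriv s₂ t + d₃*deriv s₁ t := by
  have H := ((((((smoothHD (smoothD hf₂) t).const_mul c₁).sub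
      ((smoothHD (smoothD hf₁) t).const_mul d₁)).add
      (((((hasDerivAt_id' t).const_mul 2).mul (smoothHD (smoothD hf₂) t)).sub
        (smoothHD hf₂ t)).const_mul c₂)).sub
      (((((hasDerivAt_id' t).const_mul 2).mul (smoothHD (smoothD hf₁) t)).sub
        (smoothHD hf₁ t)).const_mul d₂)).sub
      ((smoothHD hs₂ t).const_mul c₃)).add ((smoothHD hs₁ t).const_mul d₃)
  rw [(show HasDerivAt (cmb c₁ c₂ c₃ d₁ d₂ d₃ f₁ f₂ s₁ s₂) _ t from H).deriv]
  ring

lemma deriv2_cmb {c₁ c₂ c₃ d₁ d₂ d₃ : ℝ} {f₁ f₂ s₁ s₂ : ℝ → ℝ}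
    (hf₁ : ContDiff ℝ (⊤:ℕ∞) f₁) (hf₂ : ContDiff ℝ (⊤:ℕ∞) f₂)
    (hs₁ : ContDiff ℝ (⊤:ℕ∞) s₁) (hs₂ : ContDiff ℝ (⊤:ℕ∞) s₂) (t : ℝ) :
    deriv (deriv (cmb c₁ c₂ c₃ d₁ d₂ d₃ f₁ f₂ s₁ s₂)) t =
      c₁*deriv (deriv (deriv f₂)) t - d₁*deriv (deriv (deriv f₁)) t
        + c₂*(3*deriv (deriv f₂) t + 2*t*deriv (deriv (deriv f₂)) t)
        - d₂*(3*deriv (deriv f₁) t + 2*t*deriv (deriv (deriv f₁)) t)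
        - c₃*deriv (deriv s₂) t + d₃*deriv (deriv s₁) t := by
  have e : deriv (cmb c₁ c₂ c₃ d₁ d₂ d₃ f₁ f₂ s₁ s₂) = fun u =>
      c₁*deriv (deriv f₂) u - d₁*deriv (deriv f₁) u
        + c₂*(2*deriv f₂ u + 2*u*deriv (deriv f₂) u - deriv f₂ u)
        - d₂*(2*deriv f₁ u + 2*u*deriv (deriv f₁) u - deriv f₁ u)
        - c₃*deriv s₂ u + d₃*deriv s₁ u :=
    funext fun u => deriv_cmb hf₁ hf₂ hs₁ hs₂ u
  rw [e]
  have H := (((((((smoothHD (smoothD (smoothD hf₂)) t).const_mul c₁).sub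
      ((smoothHD (smoothD (smoothD hf₁)) t).const_mul d₁)).add
      (((((smoothHD (smoothD hf₂) t).const_mul 2).add
          (((hasDerivAt_id' t).const_mul 2).mul (smoothHD (smoothD (smoothD hf₂)) t))).sub
        (smoothHD (smoothD hf₂) t)).const_mul c₂)).sub
      (((((smoothHD (smoothD hf₁) t).const_mul 2).add
          (((hasDerivAt_id' t).const_mul 2).mul (smoothHD (smoothD (smoothD hf₁)) t))).sub
        (smoothHD (smoothD hf₁) t)).const_mul d₂)).sub
      ((smoothHD (smoothD hs₂) t).const_mul c₃)).add
      ((smoothHD (smoothD hs₁) t).const_mul d₃))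
  exact H.deriv.trans (by ring)

lemma deriv_cmbm {a₁ c₁ c₂ d₁ d₂ : ℝ} {m₁ m₂ g₁ g₂ h₁ h₂ k₁ k₂ : ℝ → ℝ}
    (hm₁ : ContDiff ℝ (⊤:ℕ∞) m₁) (hm₂ : ContDiff ℝ (⊤:ℕ∞) m₂)
    (hg₁ : ContDiff ℝ (⊤:ℕ∞) g₁) (hg₂ : ContDiff ℝ (⊤:ℕ∞) g₂)
    (hh₁ : ContDiff ℝ (⊤:ℕ∞) h₁) (hh₂ : ContDiff ℝ (⊤:ℕ∞) h₂)
    (hk₁ : ContDiff ℝ (⊤:ℕ∞) k₁) (hk₂ : ContDiff ℝ (⊤:ℕ∞) k₂) (t : ℝ) :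
    deriv (cmbm a₁ c₁ c₂ d₁ d₂ m₁ m₂ g₁ g₂ h₁ h₂ k₁ k₂) t =
      c₁*deriv (deriv m₂) t - d₁*deriv (deriv m₁) t
        + c₂*(2*deriv m₂ t + 2*t*deriv (deriv m₂) t) - d₂*(2*deriv m₁ t + 2*t*deriv (deriv m₁) t)
        + 1/2*(g₂ t*deriv (deriv g₁) t - g₁ t*deriv (deriv g₂) t)
        + 1/(2*a₁)*(h₂ t*deriv (deriv h₁) t - h₁ t*deriv (deriv h₂) t)
        + 1/2*(k₂ t*deriv (deriv k₁) t - k₁ t*deriv (deriv k₂) t) := by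
  have H := (((((((smoothHD (smoothD hm₂) t).const_mul c₁).sub
      ((smoothHD (smoothD hm₁) t).const_mul d₁)).add
      ((((hasDerivAt_id' t).const_mul 2).mul (smoothHD (smoothD hm₂) t)).const_mul c₂)).sub
      ((((hasDerivAt_id' t).const_mul 2).mul (smoothHD (smoothD hm₁) t)).const_mul d₂)).add
      ((((smoothHD hg₂ t).mul (smoothHD (smoothD hg₁) t)).sub
        ((smoothHD hg₁ t).mul (smoothHD (smoothD hg₂) t))).const_mul (1/2))).add
      ((((smoothHD hh₂ t).mul (smoothHD (smoothD hh₁) t)).sub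
        ((smoothHD hh₁ t).mul (smoothHD (smoothD hh₂) t))).const_mul (1/(2*a₁)))).add
      ((((smoothHD hk₂ t).mul (smoothHD (smoothD hk₁) t)).sub
        ((smoothHD hk₁ t).mul (smoothHD (smoothD hk₂) t))).const_mul (1/2))
  rw [(show HasDerivAt (cmbm a₁ c₁ c₂ d₁ d₂ m₁ m₂ g₁ g₂ h₁ h₂ k₁ k₂) _ t from H).deriv]
  ring

set_option maxHeartbeats 2000000 in
theorem stmt8 (a₁ : ℝ) (ha₁ : a₁ ≠ 0) (V₁ V₂ : R7 → R7)
    (hV₁ : memL a₁ V₁) (hV₂ : memL a₁ V₂) :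
    memL a₁ (bracket V₁ V₂) := by
  obtain ⟨c₁, c₂, c₃, g₁, h₁, k₁, m₁, hg₁, hh₁, hk₁, hm₁, e₁⟩ := hV₁
  obtain ⟨d₁, d₂, d₃, g₂, h₂, k₂, m₂, hg₂, hh₂, hk₂, hm₂, e₂⟩ := hV₂
  rw [sum_eq_gen] at e₁ e₂
  subst e₁; subst e₂
  refine ⟨2*(c₁*d₂ - c₂*d₁), 0, 0,
    cmb c₁ c₂ c₃ d₁ d₂ d₃ g₁ g₂ k₁ k₂,
    cmb c₁ c₂ 0 d₁ d₂ 0 h₁ h₂ h₁ h₂,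
    cmb c₁ c₂ (-c₃) d₁ d₂ (-d₃) k₁ k₂ g₁ g₂,
    cmbm a₁ c₁ c₂ d₁ d₂ m₁ m₂ g₁ g₂ h₁ h₂ k₁ k₂,
    cmb_contDiff hg₁ hg₂ hk₁ hk₂,
    cmb_contDiff hh₁ hh₂ hh₁ hh₂,
    cmb_contDiff hk₁ hk₂ hg₁ hg₂,
    cmbm_contDiff hm₁ hm₂ hg₁ hg₂ hh₁ hh₂ hk₁ hk₂, ?_⟩
  rw [sum_eq_gen]
  funext p
  have E2 := gen_fderiv_apply a₁ d₁ d₂ d₃ g₂ h₂ k₂ m₂ hg₂ hh₂ hk₂ hm₂ p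
    (gen a₁ c₁ c₂ c₃ g₁ h₁ k₁ m₁ p)
  have E1 := gen_fderiv_apply a₁ c₁ c₂ c₃ g₁ h₁ k₁ m₁ hg₁ hh₁ hk₁ hm₁ p
    (gen a₁ d₁ d₂ d₃ g₂ h₂ k₂ m₂ p)
  have Dgn := deriv_cmb (c₁:=c₁) (c₂:=c₂) (c₃:=c₃) (d₁:=d₁) (d₂:=d₂) (d₃:=d₃) hg₁ hg₂ hk₁ hk₂ (p 0)
  have D2gn := deriv2_cmb (c₁:=c₁) (c₂:=c₂) (c₃:=c₃) (d₁:=d₁) (d₂:=d₂) (d₃:=d₃) hg₁ hg₂ hk₁ hk₂ (p 0)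
  have Dhn := deriv_cmb (c₁:=c₁) (c₂:=c₂) (c₃:=0) (d₁:=d₁) (d₂:=d₂) (d₃:=0) hh₁ hh₂ hh₁ hh₂ (p 0)
  have D2hn := deriv2_cmb (c₁:=c₁) (c₂:=c₂) (c₃:=0) (d₁:=d₁) (d₂:=d₂) (d₃:=0) hh₁ hh₂ hh₁ hh₂ (p 0)
  have Dkn := deriv_cmb (c₁:=c₁) (c₂:=c₂) (c₃:=-c₃) (d₁:=d₁) (d₂:=d₂) (d₃:=-d₃) hk₁ hk₂ hg₁ hg₂ (p 0)
  have D2kn := deriv2_cmb (c₁:=c₁) (c₂:=c₂) (c₃:=-c₃) (d₁:=d₁) (d₂:=d₂) (d₃:=-d₃) hk₁ hk₂ hg₁ hg₂ (p 0)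
  have Dmn := deriv_cmbm (a₁:=a₁) (c₁:=c₁) (c₂:=c₂) (d₁:=d₁) (d₂:=d₂) hm₁ hm₂ hg₁ hg₂ hh₁ hh₂ hk₁ hk₂ (p 0)
  funext i
  simp only [bracket, Pi.sub_apply]
  rw [E2 i, E1 i]
  fin_cases i <;>
  · simp only [gen, vec7m_0, vec7m_1, vec7m_2, vec7m_3, vec7m_4, vec7m_5, vec7m_6,
      vec7_0, vec7_1, vec7_2, vec7_3, vec7_4, vec7_5, vec7_6]
    try simp only [Dgn, D2gn, Dhn, D2hn, Dkn, D2kn, Dmn]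
    try simp only [cmb, cmbm]
    ring


end
end
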